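/- arXiv:1610.06808 — 3 statements merged into one kernel-verified Lean document; each statement's English description precedes it below -/
import Mathlib

section
/- For m ≥ α ≥ 0, the quantity λ_m := 2^α Σ_{k=1}^m ( (m+k)!/(k!(m−k)!) · k / ((α+1)(α+2)⋯(α+k−1)) ) satisfies λ_m ≥ 2^α (2^m − 1). In particular λ_m > 0 for all m ≥ 1 and λ_m → ∞ as m → ∞. -/
/-!
Each summand dominates `m.choose k`: from `α + j + 1 ≤ m + j + 1` we get
`m! (α+1)⋯(α+k-1) ≤ (m+k-1)! ≤ k (m+k)!`, so the sum is at least `∑_{k=1}^m C(m,k) = 2^m - 1`.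
-/

open Finset Filter

/-- The `k`-th summand of `λ_m / 2^α`. -/
noncomputable def hypersingularTerm (α : ℝ) (m k : ℕ) : ℝ :=
  (Nat.factorial (m + k) : ℝ) / ((Nat.factorial k : ℝ) * (Nat.factorial (m - k) : ℝ)) * (k : ℝ) /
    ∏ j ∈ range (k - 1), (α + (j + 1))

lemma add_natCast_add_one_pos {α : ℝ} (hα : -1 < α) (j : ℕ) : 0 < α + (j + 1) := by
  have : (0 : ℝ) ≤ j := j.cast_nonneg
  linarith

lemma prod_range_add_succ_mul_factorial (m n : ℕ) :
    (∏ j ∈ range n, ((m : ℝ) + (j + 1))) * (Nat.factorial m : ℝ) = (Nat.factorial (m + n) : ℝ) := by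
  rw [← Nat.factorial_mul_ascFactorial m n, Nat.ascFactorial_eq_prod_range]
  push_cast
  simp only [add_assoc, add_comm (1 : ℝ), mul_comm]

lemma factorial_mul_prod_le_factorial_add {α : ℝ} {m : ℕ} (hα : -1 < α) (hαm : α ≤ m) (n : ℕ) :
    (Nat.factorial m : ℝ) * ∏ j ∈ range n, (α + (j + 1)) ≤ (Nat.factorial (m + n) : ℝ) := by
  rw [← prod_range_add_succ_mul_factorial, mul_comm]
  gcongr
  exact fun j _ => (add_natCast_add_one_pos hα j).le

lemma choose_le_hypersingularTerm {α : ℝ} {m k : ℕ} (hα : -1 < α) (hαm : α ≤ m)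
    (hk : 1 ≤ k) (hkm : k ≤ m) : (m.choose k : ℝ) ≤ hypersingularTerm α m k := by
  have hprod : 0 < ∏ j ∈ range (k - 1), (α + (j + 1)) :=
    prod_pos fun j _ => add_natCast_add_one_pos hα j
  have key : (Nat.factorial m : ℝ) * ∏ j ∈ range (k - 1), (α + (j + 1)) ≤
      (Nat.factorial (m + k) : ℝ) * k :=
    calc (Nat.factorial m : ℝ) * ∏ j ∈ range (k - 1), (α + (j + 1))
        ≤ (Nat.factorial (m + (k - 1)) : ℝ) := factorial_mul_prod_le_factorial_add hα hαm _
      _ ≤ Nat.factorial (m + k) := by exact_mod_cast Nat.factorial_le (by omega)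
      _ ≤ Nat.factorial (m + k) * k := le_mul_of_one_le_right (by positivity) (by exact_mod_cast hk)
  rw [Nat.cast_choose ℝ hkm, hypersingularTerm, div_mul_eq_mul_div, div_div,
    div_le_div_iff₀ (by positivity) (mul_pos (by positivity) hprod)]
  linear_combination (Nat.factorial k * Nat.factorial (m - k) : ℝ) * key

lemma sum_Icc_one_choose (m : ℕ) : ∑ k ∈ Icc 1 m, (m.choose k : ℝ) = 2 ^ m - 1 := by
  rw [← Ico_add_one_right_eq_Icc, sum_Ico_eq_sub _ (by omega)]
  norm_num [← Nat.cast_sum, Nat.sum_range_choose]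

lemma two_pow_sub_one_le_sum_hypersingularTerm {α : ℝ} {m : ℕ} (hα : -1 < α) (hαm : α ≤ m) :
    (2 : ℝ) ^ m - 1 ≤ ∑ k ∈ Icc 1 m, hypersingularTerm α m k := by
  rw [← sum_Icc_one_choose]
  refine sum_le_sum fun k hk => ?_
  obtain ⟨hk1, hkm⟩ := mem_Icc.mp hk
  exact choose_le_hypersingularTerm hα hαm hk1 hkm

/-- For `m ≥ α ≥ 0`, the eigenvalue
`λ_m = 2^α ∑_{k=1}^m (m+k)!/(k!(m-k)!) · k/((α+1)⋯(α+k-1))`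
satisfies `λ_m ≥ 2^α (2^m - 1)`; in particular `λ_m > 0` for `m ≥ 1` and `λ_m → ∞`. -/
theorem stmt_4 (α : ℝ) (hα : 0 ≤ α) :
    (∀ m : ℕ, (α : ℝ) ≤ m →
        (2 : ℝ) ^ α * ((2 : ℝ) ^ m - 1) ≤
          (2 : ℝ) ^ α * ∑ k ∈ Icc 1 m,
            (Nat.factorial (m + k) : ℝ) /
                ((Nat.factorial k : ℝ) * (Nat.factorial (m - k) : ℝ)) * (k : ℝ) /
              ∏ j ∈ range (k - 1), (α + (j + 1))) ∧
    (∀ m : ℕ, 1 ≤ m → (α : ℝ) ≤ m →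
        0 < (2 : ℝ) ^ α * ∑ k ∈ Icc 1 m,
            (Nat.factorial (m + k) : ℝ) /
                ((Nat.factorial k : ℝ) * (Nat.factorial (m - k) : ℝ)) * (k : ℝ) /
              ∏ j ∈ range (k - 1), (α + (j + 1))) ∧
    Tendsto (fun m : ℕ =>
        (2 : ℝ) ^ α * ∑ k ∈ Icc 1 m,
          (Nat.factorial (m + k) : ℝ) /
              ((Nat.factorial k : ℝ) * (Nat.factorial (m - k) : ℝ)) * (k : ℝ) /
            ∏ j ∈ range (k - 1), (α + (j + 1)))
      atTop atTop := by
  have lower (m : ℕ) (hm : α ≤ m) :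
      (2 : ℝ) ^ α * (2 ^ m - 1) ≤ 2 ^ α * ∑ k ∈ Icc 1 m, hypersingularTerm α m k :=
    mul_le_mul_of_nonneg_left (two_pow_sub_one_le_sum_hypersingularTerm (by linarith) hm)
      (by positivity)
  refine ⟨lower, fun m hm1 hm => ?_, ?_⟩
  · refine lt_of_lt_of_le ?_ (lower m hm)
    have : (2 : ℝ) ≤ 2 ^ m := le_self_pow₀ one_le_two (by omega)
    exact mul_pos (by positivity) (by linarith)
  · have hgrow : Tendsto (fun m : ℕ => (2 : ℝ) ^ α * (2 ^ m - 1)) atTop atTop :=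
      (tendsto_atTop_add_const_right _ (-1)
        (tendsto_pow_atTop_atTop_of_one_lt one_lt_two)).const_mul_atTop (by positivity)
    refine tendsto_atTop_mono' atTop ?_ hgrow
    filter_upwards [eventually_ge_atTop ⌈α⌉₊] with m hm
    exact lower m ((Nat.le_ceil α).trans (by exact_mod_cast hm))
end

section
/- With u_i(x,ξ) := ((ξ_i − x_i)(1 − ‖x‖²) − x_i ‖ξ − x‖²)/‖x − ξ‖² as above, for all x in the open unit ball, ξ, η on the unit sphere of R^{n+1}: Σ_{i=0}^n (u_i(x,ξ) − u_i(x,η))² = ‖ξ − η‖² P(x,ξ) P(x,η) = d_x(ξ,η)², where P(x,ξ) = (1−‖x‖²)/‖x−ξ‖² is the Poisson kernel and d_x the visual metric. -/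
noncomputable def poissonKer {n : ℕ} (x ξ : EuclideanSpace ℝ (Fin (n + 1))) : ℝ :=
  (1 - ‖x‖ ^ 2) / ‖x - ξ‖ ^ 2

noncomputable def visMetric {n : ℕ} (x ξ η : EuclideanSpace ℝ (Fin (n + 1))) : ℝ :=
  Real.sqrt (poissonKer x ξ) * Real.sqrt (poissonKer x η) * ‖ξ - η‖

noncomputable def uCoeff {n : ℕ} (x ξ : EuclideanSpace ℝ (Fin (n + 1))) (i : Fin (n + 1)) : ℝ :=
  ((ξ i - x i) * (1 - ‖x‖ ^ 2) - x i * ‖ξ - x‖ ^ 2) / ‖x - ξ‖ ^ 2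

/-- For `x` in the open unit ball and `ξ, η` on the unit sphere of `ℝ^{n+1}`:
`∑ᵢ (uᵢ(x,ξ) - uᵢ(x,η))² = ‖ξ-η‖² P(x,ξ) P(x,η) = d_x(ξ,η)²`. -/
theorem stmt_10 {n : ℕ} (x ξ η : EuclideanSpace ℝ (Fin (n + 1)))
    (hx : ‖x‖ < 1) (hξ : ‖ξ‖ = 1) (hη : ‖η‖ = 1) :
    (∑ i : Fin (n + 1), (uCoeff x ξ i - uCoeff x η i) ^ 2 =
        ‖ξ - η‖ ^ 2 * poissonKer x ξ * poissonKer x η) ∧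
      ‖ξ - η‖ ^ 2 * poissonKer x ξ * poissonKer x η = visMetric x ξ η ^ 2 := by
  have hxξ : ‖x - ξ‖ ≠ 0 := by
    intro h
    rw [norm_eq_zero, sub_eq_zero] at h
    rw [h, hξ] at hx
    exact lt_irrefl 1 hx
  have hxη : ‖x - η‖ ≠ 0 := by
    intro h
    rw [norm_eq_zero, sub_eq_zero] at h
    rw [h, hη] at hx
    exact lt_irrefl 1 hx
  have ha : (0:ℝ) < ‖x - ξ‖ ^ 2 := by positivity
  have hb : (0:ℝ) < ‖x - η‖ ^ 2 := by positivity
  have hA : (0:ℝ) ≤ 1 - ‖x‖ ^ 2 := by nlinarith [norm_nonneg x]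
  set A : ℝ := 1 - ‖x‖ ^ 2 with hAdef
  set p : EuclideanSpace ℝ (Fin (n + 1)) := ξ - x with hp
  set q : EuclideanSpace ℝ (Fin (n + 1)) := η - x with hq
  have hpn : ‖p‖ = ‖x - ξ‖ := norm_sub_rev _ _
  have hqn : ‖q‖ = ‖x - η‖ := norm_sub_rev _ _
  set v : EuclideanSpace ℝ (Fin (n + 1)) :=
    (A / ‖x - ξ‖ ^ 2) • p - (A / ‖x - η‖ ^ 2) • q with hv
  have hcoord : ∀ i, uCoeff x ξ i - uCoeff x η i = v i := by
    intro i
    have h1 : p i = ξ i - x i := rfl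
    have h2 : q i = η i - x i := rfl
    have hv' : v i = (A / ‖x - ξ‖ ^ 2) * p i - (A / ‖x - η‖ ^ 2) * q i := rfl
    rw [hv', h1, h2]
    unfold uCoeff
    rw [← hpn, ← hqn]
    have hpz : ‖ξ - x‖ ≠ 0 := by rw [norm_sub_rev]; exact hxξ
    have hqz : ‖η - x‖ ≠ 0 := by rw [norm_sub_rev]; exact hxη
    rw [← hp, ← hq, ← hAdef]
    have hpz' : ‖p‖ ≠ 0 := by rw [hpn]; exact hxξ
    have hqz' : ‖q‖ ≠ 0 := by rw [hqn]; exact hxη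
    field_simp
    ring
  constructor
  · have hsum : ∑ i : Fin (n + 1), (uCoeff x ξ i - uCoeff x η i) ^ 2 = ‖v‖ ^ 2 := by
      rw [EuclideanSpace.norm_eq, Real.sq_sqrt (by positivity)]
      refine Finset.sum_congr rfl fun i _ => ?_
      rw [hcoord i, Real.norm_eq_abs, sq_abs]
    rw [hsum]
    have hvsq : ‖v‖ ^ 2 = (A / ‖x - ξ‖ ^ 2) ^ 2 * ‖p‖ ^ 2
        - 2 * ((A / ‖x - ξ‖ ^ 2) * (A / ‖x - η‖ ^ 2) * inner ℝ p q)
        + (A / ‖x - η‖ ^ 2) ^ 2 * ‖q‖ ^ 2 := by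
      rw [hv, @norm_sub_sq_real, real_inner_smul_left, real_inner_smul_right,
        norm_smul, norm_smul, mul_pow, mul_pow, Real.norm_eq_abs, Real.norm_eq_abs,
        sq_abs, sq_abs]
      ring
    have hξη : ξ - η = p - q := by rw [hp, hq]; abel
    have hξηsq : ‖ξ - η‖ ^ 2 = ‖p‖ ^ 2 - 2 * inner ℝ p q + ‖q‖ ^ 2 := by
      rw [hξη, @norm_sub_sq_real]
    rw [hvsq, hξηsq]
    unfold poissonKer
    rw [← hAdef, hpn, hqn]
    field_simp
    ring
  · unfold visMetric
    have hPξ : (0:ℝ) ≤ poissonKer x ξ := div_nonneg hA (le_of_lt ha)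
    have hPη : (0:ℝ) ≤ poissonKer x η := div_nonneg hA (le_of_lt hb)
    rw [mul_pow, mul_pow, Real.sq_sqrt hPξ, Real.sq_sqrt hPη]
    ring
end

section
/- Let Γ act freely on a set X, let g be in the commensurator of Γ with coset representatives δ_i (Γ = ⊔_{i=1}^d δ_i Γ_{g^{-1}}), and form the fiber product X ×_{τ_g} M_g = {(x, m) ∈ X × M_g : π(x) = τ_g(m)}, where M_g = X/Γ_g, π : X → X/Γ is the quotient map and τ_g : M_g → X/Γ is induced by x ↦ π(xg). Then the maps φ_i : X → X ×_{τ_g} M_g, x ↦ (x g δ_i^{-1}, [x]), for i = 1,…,d, are injective, have pairwise disjoint images, and their images cover X ×_{τ_g} M_g; hence they assemble to a bijection ⊔_{i=1}^d X → X ×_{τ_g} M_g. -/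
/-!
Write `Γ_g = Γ ∩ gΓg⁻¹`; conjugation by `g` maps `Γ_{g⁻¹}` into `Γ_g`. A point `(x', [y])` of the
fiber product has `x' γ = y g` for some `γ ∈ Γ`; writing `γ = δᵢ h` with `h ∈ Γ_{g⁻¹}` gives
`x' = φᵢ(y g h⁻¹ g⁻¹)` with `g h⁻¹ g⁻¹ ∈ Γ_g`. Conversely, if `φᵢ(x) = φⱼ(x γ)` with `γ ∈ Γ_g`,
freeness forces `g⁻¹ γ g = δᵢ⁻¹ δⱼ`, so `δᵢ` and `δⱼ` represent the same coset of `Γ_{g⁻¹}`,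
whence `i = j` and `γ = 1`.
-/

namespace Subgroup

variable {G : Type*} [Group G]

/-- The subgroup `Γ_g = Γ ∩ gΓg⁻¹`. -/
def interConj (Γ : Subgroup G) (g : G) : Subgroup G where
  carrier := {γ | γ ∈ Γ ∧ g⁻¹ * γ * g ∈ Γ}
  one_mem' := ⟨Γ.one_mem, by simp⟩
  mul_mem' := by
    rintro a b ⟨ha, ha'⟩ ⟨hb, hb'⟩
    refine ⟨Γ.mul_mem ha hb, ?_⟩
    simpa only [mul_assoc, mul_inv_cancel_left] using Γ.mul_mem ha' hb'
  inv_mem' := by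
    rintro a ⟨ha, ha'⟩
    refine ⟨Γ.inv_mem ha, ?_⟩
    simpa only [mul_inv_rev, inv_inv, mul_assoc] using Γ.inv_mem ha'

variable {Γ : Subgroup G} {g h γ : G}

@[simp]
theorem mem_interConj : γ ∈ Γ.interConj g ↔ γ ∈ Γ ∧ g⁻¹ * γ * g ∈ Γ := Iff.rfl

theorem conj_mem_interConj (hh : h ∈ Γ.interConj g⁻¹) : g * h * g⁻¹ ∈ Γ.interConj g := by
  simp_all [mul_assoc]

theorem inv_conj_mem_interConj_inv (hγ : γ ∈ Γ.interConj g) :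
    g⁻¹ * γ * g ∈ Γ.interConj g⁻¹ := by
  simp_all [mul_assoc]

theorem eq_of_inv_mul_mem_interConj_inv {ι : Type*} {δ : ι → G} (hδ : ∀ i, δ i ∈ Γ)
    (hcoset : ∀ γ ∈ Γ, ∃! i, (δ i)⁻¹ * γ ∈ Γ.interConj g⁻¹) {i j : ι}
    (hij : (δ i)⁻¹ * δ j ∈ Γ.interConj g⁻¹) : i = j := by
  obtain ⟨k, -, hk⟩ := hcoset (δ j) (hδ j)
  have hjj : (δ j)⁻¹ * δ j ∈ Γ.interConj g⁻¹ := by simp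
  exact (hk i hij).trans (hk j hjj).symm

end Subgroup

open Subgroup

section RightAction

variable {X G : Type*} [Group G] {act : X → G → X}

theorem orbitRel_equivalence (hact1 : ∀ x, act x 1 = x)
    (hactm : ∀ x a b, act (act x a) b = act x (a * b)) (H : Subgroup G) :
    Equivalence (fun a b : X => ∃ γ ∈ H, act a γ = b) where
  refl x := ⟨1, H.one_mem, hact1 x⟩
  symm := by
    rintro a _ ⟨γ, hγ, rfl⟩
    exact ⟨γ⁻¹, H.inv_mem hγ, by rw [hactm, mul_inv_cancel, hact1]⟩
  trans := by
    rintro a _ _ ⟨γ, hγ, rfl⟩ ⟨η, hη, rfl⟩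
    exact ⟨γ * η, H.mul_mem hγ hη, (hactm a γ η).symm⟩

theorem quot_mk_orbitRel_eq_iff (hact1 : ∀ x, act x 1 = x)
    (hactm : ∀ x a b, act (act x a) b = act x (a * b)) (H : Subgroup G) (x y : X) :
    Quot.mk (fun a b : X => ∃ γ ∈ H, act a γ = b) x =
        Quot.mk (fun a b : X => ∃ γ ∈ H, act a γ = b) y ↔ ∃ γ ∈ H, act x γ = y :=
  (orbitRel_equivalence hact1 hactm H).quot_mk_eq_iff x y

theorem eq_of_act_eq_of_free (hactm : ∀ x a b, act (act x a) b = act x (a * b))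
    {Γ : Subgroup G} (hfree : ∀ x : X, ∀ γ ∈ Γ, act x γ = x → γ = 1) {x : X} {a b : G}
    (hab : a⁻¹ * b ∈ Γ) (h : act x a = act x b) : a = b := by
  have hfix : act (act x a) (a⁻¹ * b) = act x a := by rw [hactm, mul_inv_cancel_left, h]
  exact inv_mul_eq_one.mp (hfree _ _ hab hfix)

variable {Γ : Subgroup G} {g : G} {ι : Type*} {δ : ι → G}

theorem eq_and_eq_one_of_act_eq (hactm : ∀ x a b, act (act x a) b = act x (a * b))
    (hfree : ∀ x : X, ∀ γ ∈ Γ, act x γ = x → γ = 1) (hδ : ∀ i, δ i ∈ Γ)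
    (hcoset : ∀ γ ∈ Γ, ∃! i, (δ i)⁻¹ * γ ∈ Γ.interConj g⁻¹) {i j : ι} {x : X} {γ : G}
    (hγ : γ ∈ Γ.interConj g) (h : act x (g * (δ i)⁻¹) = act (act x γ) (g * (δ j)⁻¹)) :
    i = j ∧ γ = 1 := by
  have hmem : (g * (δ i)⁻¹)⁻¹ * (γ * (g * (δ j)⁻¹)) ∈ Γ := by
    have : δ i * (g⁻¹ * γ * g) * (δ j)⁻¹ ∈ Γ :=
      Γ.mul_mem (Γ.mul_mem (hδ i) hγ.2) (Γ.inv_mem (hδ j))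
    simpa only [mul_inv_rev, inv_inv, mul_assoc] using this
  have hconj : g * (δ i)⁻¹ = γ * (g * (δ j)⁻¹) :=
    eq_of_act_eq_of_free hactm hfree hmem (by rw [h, hactm])
  have hδγ : (δ i)⁻¹ * δ j = g⁻¹ * γ * g :=
    calc (δ i)⁻¹ * δ j = g⁻¹ * (g * (δ i)⁻¹) * δ j := by group
      _ = g⁻¹ * (γ * (g * (δ j)⁻¹)) * δ j := by rw [hconj]
      _ = g⁻¹ * γ * g := by group
  obtain rfl : i = j := eq_of_inv_mul_mem_interConj_inv hδ hcoset
    (hδγ ▸ inv_conj_mem_interConj_inv hγ)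
  exact ⟨rfl, right_eq_mul.mp hconj⟩

theorem exists_act_interConj_act_eq (hact1 : ∀ x, act x 1 = x)
    (hactm : ∀ x a b, act (act x a) b = act x (a * b))
    (hcoset : ∀ γ ∈ Γ, ∃! i, (δ i)⁻¹ * γ ∈ Γ.interConj g⁻¹) {x' y : X} {γ : G} (hγ : γ ∈ Γ)
    (h : act x' γ = act y g) : ∃ i, ∃ k ∈ Γ.interConj g, act (act y k) (g * (δ i)⁻¹) = x' := by
  obtain ⟨i, hi, -⟩ := hcoset γ hγ
  refine ⟨i, g * ((δ i)⁻¹ * γ)⁻¹ * g⁻¹, conj_mem_interConj (inv_mem hi), ?_⟩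
  calc act (act y (g * ((δ i)⁻¹ * γ)⁻¹ * g⁻¹)) (g * (δ i)⁻¹)
      = act (act y g) γ⁻¹ := by rw [hactm, hactm]; group
    _ = x' := by rw [← h, hactm, mul_inv_cancel, hact1]

end RightAction

/-- For a free right action of `Γ` on `X`, `g` in the commensurator with coset
representatives `Γ = ⊔ᵢ δᵢ Γ_{g⁻¹}`, the maps `φᵢ : X → X ×_{τ_g} M_g`,
`x ↦ (x g δᵢ⁻¹, [x])` are well defined (land in the fiber product), injective with
pairwise disjoint images, and jointly surjective: they assemble to a bijection
`⊔ᵢ X → X ×_{τ_g} M_g`.  Here `M = X/Γ` and `M_g = X/Γ_g` are realized as quotients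
by the orbit relations. -/
theorem stmt_18 {X : Type*} {G : Type*} [Group G] (act : X → G → X)
    (hact1 : ∀ x, act x 1 = x) (hactm : ∀ x a b, act (act x a) b = act x (a * b))
    (Γ : Subgroup G)
    (hfree : ∀ x : X, ∀ γ ∈ Γ, act x γ = x → γ = 1)
    (g : G) (d : ℕ) (δ : Fin d → G) (hδ : ∀ i, δ i ∈ Γ)
    (hcoset : ∀ γ ∈ Γ, ∃! i : Fin d,
      (δ i)⁻¹ * γ ∈ Γ ∧ g * ((δ i)⁻¹ * γ) * g⁻¹ ∈ Γ) :
    -- the maps land in the fiber product: `π(x g δᵢ⁻¹) = τ_g([x]) = π(x g)`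
    (∀ (i : Fin d) (x : X),
        Quot.mk (fun a b : X => ∃ γ ∈ Γ, act a γ = b) (act x (g * (δ i)⁻¹)) =
          Quot.mk (fun a b : X => ∃ γ ∈ Γ, act a γ = b) (act x g)) ∧
    -- the assembled map on `⊔ᵢ X = Fin d × X` is injective
    Function.Injective (fun q : Fin d × X =>
        (act q.2 (g * (δ q.1)⁻¹),
          Quot.mk (fun a b : X => ∃ γ, (γ ∈ Γ ∧ g⁻¹ * γ * g ∈ Γ) ∧ act a γ = b) q.2)) ∧
    -- and surjective onto the fiber product
    (∀ x' y : X,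
        Quot.mk (fun a b : X => ∃ γ ∈ Γ, act a γ = b) x' =
          Quot.mk (fun a b : X => ∃ γ ∈ Γ, act a γ = b) (act y g) →
        ∃ (i : Fin d) (x : X), act x (g * (δ i)⁻¹) = x' ∧
          Quot.mk (fun a b : X => ∃ γ, (γ ∈ Γ ∧ g⁻¹ * γ * g ∈ Γ) ∧ act a γ = b) x =
            Quot.mk (fun a b : X => ∃ γ, (γ ∈ Γ ∧ g⁻¹ * γ * g ∈ Γ) ∧ act a γ = b) y) := by
  have hcoset' : ∀ γ ∈ Γ, ∃! i, (δ i)⁻¹ * γ ∈ Γ.interConj g⁻¹ := by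
    simpa only [mem_interConj, inv_inv] using hcoset
  refine ⟨fun i x => Quot.sound ⟨δ i, hδ i, by rw [hactm, inv_mul_cancel_right]⟩, ?_, ?_⟩
  · rintro ⟨i, x⟩ ⟨j, y⟩ h
    obtain ⟨hx, hxy⟩ := Prod.mk.inj h
    -- the relation defining `M_g` is definitionally the orbit relation of `Γ.interConj g`
    obtain ⟨γ, hγ, rfl⟩ := (quot_mk_orbitRel_eq_iff hact1 hactm (Γ.interConj g) x y).mp hxy
    obtain ⟨rfl, rfl⟩ := eq_and_eq_one_of_act_eq hactm hfree hδ hcoset' hγ hx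
    rw [hact1]
  · intro x' y h
    obtain ⟨γ, hγ, hx'⟩ := (quot_mk_orbitRel_eq_iff hact1 hactm Γ x' (act y g)).mp h
    obtain ⟨i, k, hk, rfl⟩ := exists_act_interConj_act_eq hact1 hactm hcoset' hγ hx'
    exact ⟨i, act y k, rfl, (Quot.sound ⟨k, hk, rfl⟩).symm⟩
end
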